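/- arXiv:2502.15416 — 2 statements merged into one kernel-verified Lean document; each statement's English description precedes it below -/
import Mathlib

section
/- Suppose the basis matrices B₁,…,B_p are linearly independent. Define λ_m = max_{1 ≤ j ≤ p} |Σ_{i=1}^n ⟨B_j, Z_i⟩|, where ⟨A,B⟩ = tr(AᵀB) is the Frobenius inner product. Then for every λ > λ_m, the minimizer θ̂^λ of ℓ^λ equals the zero vector. -/
open Matrix MeasureTheory ProbabilityTheory Finset

noncomputable section

/-- Frobenius inner product `⟨A,B⟩ = tr(Aᵀ B)`. -/
def frobInner {d : ℕ} (A B : Matrix (Fin d) (Fin d) ℝ) : ℝ := Matrix.trace (Aᵀ * B)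

/-- Frobenius norm `‖A‖_F = √⟨A,A⟩`. -/
def frobNorm {d : ℕ} (A : Matrix (Fin d) (Fin d) ℝ) : ℝ := Real.sqrt (frobInner A A)

/-- Spectral (operator) norm of a matrix, as the operator norm of the induced
linear map on Euclidean space. -/
def specNorm {d : ℕ} (A : Matrix (Fin d) (Fin d) ℝ) : ℝ :=
  ‖LinearMap.toContinuousLinearMap (Matrix.toEuclideanLin A)‖

/-- Loewner order: `A ⪯ B` iff `B - A` is positive semidefinite. -/
def loewnerLE {d : ℕ} (A B : Matrix (Fin d) (Fin d) ℝ) : Prop := (B - A).PosSemidef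

/-- Entrywise expectation of a random matrix. -/
def matExp {Ω : Type*} [MeasurableSpace Ω] (μ : Measure Ω) {d : ℕ}
    (X : Ω → Matrix (Fin d) (Fin d) ℝ) : Matrix (Fin d) (Fin d) ℝ :=
  Matrix.of fun a c => ∫ ω, X ω a c ∂μ

/-- Linear predictor `Γ_θ = ∑ⱼ θⱼ Bⱼ`. -/
def Gamma {d p : ℕ} (B : Fin p → Matrix (Fin d) (Fin d) ℝ) (θ : Fin p → ℝ) :
    Matrix (Fin d) (Fin d) ℝ := ∑ j, θ j • B j

/-- Empirical risk `ℓ(θ) = ∑ᵢ ‖Zᵢ - Γ_θ‖_F²`. -/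
def empRisk {d p n : ℕ} (B : Fin p → Matrix (Fin d) (Fin d) ℝ)
    (Z : Fin n → Matrix (Fin d) (Fin d) ℝ) (θ : Fin p → ℝ) : ℝ :=
  ∑ i, (frobNorm (Z i - Gamma B θ)) ^ 2

/-- Penalized objective `ℓ^λ(θ) = ℓ(θ) + 2λ ∑ⱼ |θⱼ|`. -/
def objective {d p n : ℕ} (B : Fin p → Matrix (Fin d) (Fin d) ℝ)
    (Z : Fin n → Matrix (Fin d) (Fin d) ℝ) (lam : ℝ) (θ : Fin p → ℝ) : ℝ :=
  empRisk B Z θ + 2 * lam * ∑ j, |θ j|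

/-- Soft-thresholding operator `ST`. -/
def softThresh (a lam : ℝ) : ℝ := if lam < a then a - lam else if a < -lam then a + lam else 0

/-- Measurable space structure on matrices (entrywise, via the Pi structure). -/
instance matrixMeasurableSpace {d : ℕ} : MeasurableSpace (Matrix (Fin d) (Fin d) ℝ) :=
  (inferInstance : MeasurableSpace (Fin d → Fin d → ℝ))


lemma frobInner_self_nonneg {d : ℕ} (A : Matrix (Fin d) (Fin d) ℝ) : 0 ≤ frobInner A A := by
  have h : frobInner A A = ∑ i, ∑ k, A k i * A k i := by
    simp [frobInner, Matrix.trace, Matrix.mul_apply, Matrix.diag]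
  rw [h]
  exact Finset.sum_nonneg fun i _ => Finset.sum_nonneg fun k _ => mul_self_nonneg _

lemma frobNorm_sq {d : ℕ} (A : Matrix (Fin d) (Fin d) ℝ) : (frobNorm A) ^ 2 = frobInner A A :=
  Real.sq_sqrt (frobInner_self_nonneg A)

lemma frobInner_sub_self {d : ℕ} (A C : Matrix (Fin d) (Fin d) ℝ) :
    frobInner (A - C) (A - C) = frobInner A A - 2 * frobInner C A + frobInner C C := by
  unfold frobInner
  rw [Matrix.transpose_sub, Matrix.sub_mul, Matrix.mul_sub, Matrix.mul_sub]
  simp only [Matrix.trace_sub]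
  have h : Matrix.trace (Aᵀ * C) = Matrix.trace (Cᵀ * A) := by
    rw [← Matrix.trace_transpose (Aᵀ * C), Matrix.transpose_mul, Matrix.transpose_transpose]
  rw [h]; ring

lemma frobInner_zero_left {d : ℕ} (C : Matrix (Fin d) (Fin d) ℝ) : frobInner 0 C = 0 := by
  simp [frobInner]

lemma frobInner_gamma {d p : ℕ} (B : Fin p → Matrix (Fin d) (Fin d) ℝ) (θ : Fin p → ℝ)
    (C : Matrix (Fin d) (Fin d) ℝ) :
    frobInner (Gamma B θ) C = ∑ j, θ j * frobInner (B j) C := by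
  simp [Gamma, frobInner, Matrix.transpose_sum, Finset.sum_mul, Matrix.trace_sum,
    Matrix.transpose_smul, Matrix.smul_mul, Matrix.trace_smul, smul_eq_mul]

/-- if `λ` exceeds `λ_m = max_j |∑ᵢ ⟨Bⱼ, Zᵢ⟩|`, then the minimizer of
`ℓ^λ` is the zero vector. -/
theorem stmt_2 {d p n : ℕ} (hp : 0 < p)
    (B : Fin p → Matrix (Fin d) (Fin d) ℝ) (hBsymm : ∀ j, (B j)ᵀ = B j)
    (hBindep : LinearIndependent ℝ B)
    (Z : Fin n → Matrix (Fin d) (Fin d) ℝ) (hZsymm : ∀ i, (Z i)ᵀ = Z i)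
    (lamMax : ℝ)
    (hlamMax : lamMax = Finset.univ.sup' (Finset.univ_nonempty_iff.mpr ⟨⟨0, hp⟩⟩)
      (fun j => |∑ i, frobInner (B j) (Z i)|))
    (lam : ℝ) (hlam : lamMax < lam)
    (θhat : Fin p → ℝ) (hθhat : ∀ θ, objective B Z lam θhat ≤ objective B Z lam θ) :
    θhat = 0 := by
  by_contra hne
  set S : Fin p → ℝ := fun j => ∑ i, frobInner (B j) (Z i) with hS
  have hSle : ∀ j, |S j| ≤ lamMax := by
    intro j; rw [hlamMax]
    exact Finset.le_sup' (fun j => |∑ i, frobInner (B j) (Z i)|) (Finset.mem_univ j)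
  have key : ∑ i, frobInner (Gamma B θhat) (Z i) = ∑ j, θhat j * S j := by
    simp only [frobInner_gamma]
    rw [Finset.sum_comm]
    simp [hS, Finset.mul_sum]
  have h0 : empRisk B Z (0 : Fin p → ℝ) = ∑ i, frobInner (Z i) (Z i) := by
    simp [empRisk, frobNorm_sq, Gamma]
  have hemp : empRisk B Z θhat
      = empRisk B Z 0 - 2 * ∑ j, θhat j * S j
        + (n : ℝ) * frobInner (Gamma B θhat) (Gamma B θhat) := by
    have hG0 : Gamma B (0 : Fin p → ℝ) = 0 := by simp [Gamma]
    simp only [empRisk, frobNorm_sq, frobInner_sub_self, hG0, frobInner_zero_left,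
      mul_zero, sub_zero, add_zero]
    rw [Finset.sum_add_distrib, Finset.sum_sub_distrib, ← Finset.mul_sum, key,
      Finset.sum_const, Finset.card_univ, Fintype.card_fin, nsmul_eq_mul]
  have hperj : ∀ j, (lam - lamMax) * |θhat j| ≤ lam * |θhat j| - θhat j * S j := by
    intro j
    have h1 : θhat j * S j ≤ |θhat j| * lamMax := by
      calc θhat j * S j ≤ |θhat j * S j| := le_abs_self _
        _ = |θhat j| * |S j| := abs_mul _ _
        _ ≤ |θhat j| * lamMax := mul_le_mul_of_nonneg_left (hSle j) (abs_nonneg _)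
    nlinarith [abs_nonneg (θhat j)]
  have hQ : 0 ≤ (n : ℝ) * frobInner (Gamma B θhat) (Gamma B θhat) :=
    mul_nonneg (Nat.cast_nonneg n) (frobInner_self_nonneg _)
  have hsum : (lam - lamMax) * ∑ j, |θhat j| ≤ ∑ j, (lam * |θhat j| - θhat j * S j) := by
    rw [Finset.mul_sum]
    exact Finset.sum_le_sum fun j _ => hperj j
  have hpos : 0 < ∑ j, |θhat j| := by
    obtain ⟨j, hj⟩ := Function.ne_iff.mp hne
    have : 0 < |θhat j| := abs_pos.mpr hj
    exact Finset.sum_pos' (fun k _ => abs_nonneg _) ⟨j, Finset.mem_univ j, this⟩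
  have hlt : objective B Z lam 0 < objective B Z lam θhat := by
    unfold objective
    rw [hemp]
    have h2 : 0 < 2 * (lam - lamMax) * ∑ j, |θhat j| :=
      mul_pos (mul_pos two_pos (sub_pos.mpr hlam)) hpos
    have h3 : 2 * ∑ j, (lam * |θhat j| - θhat j * S j)
        = 2 * lam * ∑ j, |θhat j| - 2 * ∑ j, θhat j * S j := by
      rw [Finset.sum_sub_distrib, Finset.mul_sum, ← Finset.mul_sum, ← Finset.mul_sum]
      ring
    simp only [Pi.zero_apply, abs_zero, Finset.sum_const_zero, mul_zero, add_zero]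
    nlinarith [hsum, hQ, h2, hpos, sub_pos.mpr hlam]
  exact absurd (hθhat 0) (not_le.mpr hlt)
end
end

section
/- Let Y be a random vector in ℝ^d with E[Y] = 0 and E[Y Yᵀ] = Σ, such that Y is sub-Gaussian, i.e. for every unit vector u ∈ ℝ^d the real random variable ⟨u, Y⟩ is sub-Gaussian. Then there exists a constant B > 0 such that, with Q = Y Yᵀ − Σ, for every integer k ≥ 2 one has E[Q^k] ⪯ (1/2) k! B^k I, where I is the d×d identity matrix. -/
open Matrix MeasureTheory ProbabilityTheory Finset

noncomputable section

/-!
Evaluating the sub-Gaussian mgf bound of a coordinate `Y j` at `t = ±√m` gives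
`E[Y j ^ (2m)] ≤ 2 m! K^m`, and by Jensen `E[|Y|^(2k)] ≤ 2 k! (d K)^k`. In operator norm
`‖Q‖ ≤ |Y|² + ‖Σ‖`, so `x ⬝ Q^k x ≤ (|Y|² + ‖Σ‖)^k |x|²` pointwise; taking expectations bounds
the quadratic form of `E[Q^k]` by `E[(|Y|² + ‖Σ‖)^k] |x|² ≤ k!/2 B^k |x|²`.
-/

open Real WithLp
open scoped NNReal Nat Matrix.Norms.L2Operator

lemma pow_abs_le_factorial_mul_exp_add_exp_neg (x : ℝ) (n : ℕ) :
    |x| ^ n ≤ n ! * (exp x + exp (-x)) := by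
  have hexp : exp |x| ≤ exp x + exp (-x) := by
    rcases abs_choice x with hx | hx <;> rw [hx] <;> linarith [exp_pos x, exp_pos (-x)]
  calc |x| ^ n = n ! * (|x| ^ n / n !) := by field_simp
    _ ≤ n ! * exp |x| := by gcongr; exact pow_div_factorial_le_exp _ (abs_nonneg x) n
    _ ≤ n ! * (exp x + exp (-x)) := by gcongr

namespace ProbabilityTheory.HasSubgaussianMGF

variable {Ω : Type*} {mΩ : MeasurableSpace Ω} {μ : Measure Ω} {X : Ω → ℝ} {c : ℝ≥0}

lemma integrable_pow (h : HasSubgaussianMGF X c μ) (n : ℕ) :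
    Integrable (fun ω ↦ X ω ^ n) μ :=
  integrable_pow_of_integrable_exp_mul one_ne_zero (h.integrable_exp_mul 1)
    (h.integrable_exp_mul (-1)) n

lemma integral_pow_two_mul_le (h : HasSubgaussianMGF X c μ) (m : ℕ) :
    ∫ ω, X ω ^ (2 * m) ∂μ ≤ 2 * m ! * (2 * exp (c / 2)) ^ m := by
  -- evaluate the mgf at `±√m`, where `exp (c t² / 2) = exp (c / 2) ^ m`
  set t := √(m : ℝ)
  have ht : t ^ 2 = m := sq_sqrt (Nat.cast_nonneg m)
  have hpointwise (ω : Ω) :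
      (m : ℝ) ^ m * X ω ^ (2 * m) ≤ (2 * m)! * (exp (t * X ω) + exp (-t * X ω)) := by
    calc (m : ℝ) ^ m * X ω ^ (2 * m) = |t * X ω| ^ (2 * m) := by
          rw [(even_two_mul m).pow_abs, mul_pow, pow_mul t, ht]
      _ ≤ _ := by simpa using pow_abs_le_factorial_mul_exp_add_exp_neg (t * X ω) (2 * m)
  have hmgf (s : ℝ) (hs : s ^ 2 = m) : mgf X μ s ≤ exp (c / 2) ^ m := by
    rw [← exp_nat_mul]
    exact (h.mgf_le s).trans_eq (by rw [hs]; ring_nf)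
  have hfactorial : ((2 * m)! : ℝ) ≤ 2 ^ m * (m : ℝ) ^ m * m ! := by
    rw [← mul_pow]; exact_mod_cast Nat.factorial_two_mul_le m
  have hmm : (0 : ℝ) < (m : ℝ) ^ m := by exact_mod_cast Nat.pow_self_pos
  refine le_of_mul_le_mul_left ?_ hmm
  calc (m : ℝ) ^ m * ∫ ω, X ω ^ (2 * m) ∂μ
      = ∫ ω, (m : ℝ) ^ m * X ω ^ (2 * m) ∂μ := (integral_const_mul _ _).symm
    _ ≤ ∫ ω, ((2 * m)! : ℝ) * (exp (t * X ω) + exp (-t * X ω)) ∂μ :=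
        integral_mono ((h.integrable_pow _).const_mul _)
          (((h.integrable_exp_mul t).add (h.integrable_exp_mul (-t))).const_mul _) hpointwise
    _ = (2 * m)! * (mgf X μ t + mgf X μ (-t)) := by
        rw [integral_const_mul, integral_add (h.integrable_exp_mul t) (h.integrable_exp_mul (-t))]
        rfl
    _ ≤ (2 ^ m * (m : ℝ) ^ m * m !) * (exp (c / 2) ^ m + exp (c / 2) ^ m) := by
        gcongr
        · exact add_nonneg mgf_nonneg mgf_nonneg
        · exact hmgf t ht
        · exact hmgf (-t) (by rw [neg_sq, ht])
    _ = (m : ℝ) ^ m * (2 * m ! * (2 * exp (c / 2)) ^ m) := by ring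

end ProbabilityTheory.HasSubgaussianMGF

namespace Matrix

lemma isHermitian_vecMulVec_self {n : Type*} (y : n → ℝ) : (vecMulVec y y).IsHermitian :=
  IsHermitian.ext fun i j ↦ by simp [vecMulVec, mul_comm]

variable {n : Type*} [Fintype n] [DecidableEq n]

lemma abs_dotProduct_mulVec_le_l2_opNorm (A : Matrix n n ℝ) (x y : n → ℝ) :
    |x ⬝ᵥ (A *ᵥ y)| ≤ ‖A‖ * ‖toLp 2 x‖ * ‖toLp 2 y‖ := by
  rw [← l2_opNorm_toEuclideanCLM, ← ofLp_toLp 2 x, ← ofLp_toLp 2 y, ← inner_toEuclideanCLM]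
  calc _ ≤ ‖toLp 2 x‖ * ‖toEuclideanCLM (n := n) (𝕜 := ℝ) A (toLp 2 y)‖ :=
        abs_real_inner_le_norm _ _
    _ ≤ ‖toLp 2 x‖ * (‖toEuclideanCLM (n := n) (𝕜 := ℝ) A‖ * ‖toLp 2 y‖) := by
        gcongr; exact ContinuousLinearMap.le_opNorm _ _
    _ = _ := by ring

lemma abs_apply_le_l2_opNorm (A : Matrix n n ℝ) (i j : n) : |A i j| ≤ ‖A‖ := by
  simpa [mulVec_single_one, PiLp.norm_single] using
    abs_dotProduct_mulVec_le_l2_opNorm A (Pi.single i 1) (Pi.single j 1)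

lemma dotProduct_mulVec_le_l2_opNorm (A : Matrix n n ℝ) (x : n → ℝ) :
    x ⬝ᵥ (A *ᵥ x) ≤ ‖A‖ * (x ⬝ᵥ x) := by
  have : x ⬝ᵥ x = ‖toLp 2 x‖ ^ 2 := by
    rw [← real_inner_self_eq_norm_sq, EuclideanSpace.inner_toLp_toLp]; rfl
  rw [this, sq, ← mul_assoc]
  exact (le_abs_self _).trans (abs_dotProduct_mulVec_le_l2_opNorm A x x)

lemma l2_opNorm_vecMulVec_le (x y : n → ℝ) : ‖vecMulVec x y‖ ≤ ‖toLp 2 x‖ * ‖toLp 2 y‖ := by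
  rw [← l2_opNorm_toEuclideanCLM]
  refine ContinuousLinearMap.opNorm_le_bound _ (by positivity) fun z ↦ ?_
  have hz : toEuclideanCLM (n := n) (𝕜 := ℝ) (vecMulVec x y) z = (y ⬝ᵥ ofLp z) • toLp 2 x := by
    ext i; simp [vecMulVec_mulVec, mul_comm]
  have hyz : |y ⬝ᵥ ofLp z| ≤ ‖toLp 2 y‖ * ‖z‖ := by
    simpa [EuclideanSpace.inner_eq_star_dotProduct, dotProduct_comm] using
      abs_real_inner_le_norm (toLp 2 y) z
  rw [hz, norm_smul, Real.norm_eq_abs]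
  calc |y ⬝ᵥ ofLp z| * ‖toLp 2 x‖ ≤ ‖toLp 2 y‖ * ‖z‖ * ‖toLp 2 x‖ := by gcongr
    _ = _ := by ring

lemma l2_opNorm_vecMulVec_self_sub_pow_le
    (y : n → ℝ) (A : Matrix n n ℝ) {k : ℕ} (hk : k ≠ 0) :
    ‖(vecMulVec y y - A) ^ k‖ ≤ (∑ j, y j ^ 2 + ‖A‖) ^ k := by
  have hy : ‖toLp 2 y‖ * ‖toLp 2 y‖ = ∑ j, y j ^ 2 := by
    rw [← sq, EuclideanSpace.real_norm_sq_eq]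
  calc ‖(vecMulVec y y - A) ^ k‖ ≤ ‖vecMulVec y y - A‖ ^ k :=
        norm_pow_le' _ (Nat.pos_of_ne_zero hk)
    _ ≤ (∑ j, y j ^ 2 + ‖A‖) ^ k := by
        gcongr
        exact (norm_sub_le _ _).trans (by grw [l2_opNorm_vecMulVec_le, hy])

end Matrix

section RandomMatrix

variable {Ω : Type*} [MeasurableSpace Ω] {μ : Measure Ω} {d : ℕ}

lemma isHermitian_matExp {M : Ω → Matrix (Fin d) (Fin d) ℝ} (hM : ∀ ω, (M ω).IsHermitian) :
    (matExp μ M).IsHermitian := by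
  ext a c
  simp only [matExp, conjTranspose_apply, of_apply, star_trivial]
  congr 1 with ω
  exact (hM ω).apply a c

lemma dotProduct_matExp_mulVec {M : Ω → Matrix (Fin d) (Fin d) ℝ}
    (hM : ∀ a c, Integrable (fun ω ↦ M ω a c) μ) (x y : Fin d → ℝ) :
    x ⬝ᵥ (matExp μ M *ᵥ y) = ∫ ω, x ⬝ᵥ (M ω *ᵥ y) ∂μ := by
  have hint (a c : Fin d) : Integrable (fun ω ↦ x a * (M ω a c * y c)) μ :=
    ((hM a c).mul_const _).const_mul _
  simp only [dotProduct, mulVec, matExp, of_apply, Finset.mul_sum]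
  rw [integral_finsetSum _ fun a _ ↦ integrable_finsetSum _ fun c _ ↦ hint a c]
  refine Finset.sum_congr rfl fun a _ ↦ ?_
  rw [integral_finsetSum _ fun c _ ↦ hint a c]
  refine Finset.sum_congr rfl fun c _ ↦ ?_
  rw [integral_const_mul, integral_mul_const]

lemma loewnerLE_smul_one_of_dotProduct_mulVec_le {A : Matrix (Fin d) (Fin d) ℝ}
    (hA : A.IsHermitian) {r : ℝ} (h : ∀ x, x ⬝ᵥ (A *ᵥ x) ≤ r * (x ⬝ᵥ x)) :
    loewnerLE A (r • 1) := by
  rw [loewnerLE, posSemidef_iff_dotProduct_mulVec]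
  refine ⟨(isHermitian_one.smul (.all r)).sub hA, fun x ↦ ?_⟩
  simpa [sub_mulVec, smul_mulVec, dotProduct_sub] using h x

lemma loewnerLE_matExp_of_norm_le {M : Ω → Matrix (Fin d) (Fin d) ℝ}
    (hmeas : ∀ a c, AEStronglyMeasurable (fun ω ↦ M ω a c) μ) (hherm : ∀ ω, (M ω).IsHermitian)
    {g : Ω → ℝ} (hg : Integrable g μ) (hMg : ∀ ω, ‖M ω‖ ≤ g ω) {r : ℝ}
    (hr : ∫ ω, g ω ∂μ ≤ r) :
    loewnerLE (matExp μ M) (r • 1) := by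
  have hint (a c : Fin d) : Integrable (fun ω ↦ M ω a c) μ :=
    hg.mono' (hmeas a c) <| .of_forall fun ω ↦ (abs_apply_le_l2_opNorm _ a c).trans (hMg ω)
  refine loewnerLE_smul_one_of_dotProduct_mulVec_le (isHermitian_matExp hherm) fun x ↦ ?_
  have hquad : Integrable (fun ω ↦ x ⬝ᵥ (M ω *ᵥ x)) μ := by
    simp only [dotProduct, mulVec]
    fun_prop
  rw [dotProduct_matExp_mulVec hint]
  calc ∫ ω, x ⬝ᵥ (M ω *ᵥ x) ∂μ ≤ ∫ ω, g ω * (x ⬝ᵥ x) ∂μ :=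
        integral_mono hquad (hg.mul_const _) fun ω ↦
          (dotProduct_mulVec_le_l2_opNorm _ x).trans <| by
            gcongr; exacts [dotProduct_self_star_nonneg x, hMg ω]
    _ ≤ r * (x ⬝ᵥ x) := by
        rw [integral_mul_const]; gcongr; exact dotProduct_self_star_nonneg x

end RandomMatrix

lemma two_pow_pred_mul_le_factorial_mul {k : ℕ} (hk : 2 ≤ k) {a b T : ℝ} (ha : 0 ≤ a)
    (hb : 0 ≤ b) (haT : a ≤ T) (hbT : b ≤ T) :
    2 ^ (k - 1) * (2 * k ! * a ^ k + b ^ k) ≤ k ! / 2 * (4 * T) ^ k := by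
  obtain ⟨n, rfl⟩ : ∃ n, k = n + 1 := ⟨k - 1, by omega⟩
  have hfac : (1 : ℝ) ≤ (n + 1)! := Nat.one_le_cast.mpr (Nat.factorial_pos _)
  have h3 : (3 : ℝ) ≤ 2 ^ (n + 1) := by
    calc (3 : ℝ) ≤ 2 ^ 2 := by norm_num
      _ ≤ 2 ^ (n + 1) := pow_le_pow_right₀ (by norm_num) hk
  have hT : 0 ≤ T ^ (n + 1) := pow_nonneg (ha.trans haT) _
  calc 2 ^ (n + 1 - 1) * (2 * (n + 1)! * a ^ (n + 1) + b ^ (n + 1))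
      ≤ 2 ^ n * (2 * (n + 1)! * T ^ (n + 1) + (n + 1)! * T ^ (n + 1)) := by
        rw [Nat.add_sub_cancel]
        gcongr
        exact (pow_le_pow_left₀ hb hbT _).trans (le_mul_of_one_le_left hT hfac)
    _ = 2 ^ n * 3 * ((n + 1)! * T ^ (n + 1)) := by ring
    _ ≤ 2 ^ n * 2 ^ (n + 1) * ((n + 1)! * T ^ (n + 1)) := by gcongr
    _ = (n + 1)! / 2 * (4 * T) ^ (n + 1) := by
        rw [show (4 : ℝ) * T = 2 * 2 * T by norm_num, mul_pow, mul_pow]; ring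

section RandomVector

variable {Ω : Type*} [MeasurableSpace Ω] {μ : Measure Ω} {ι : Type*} [Fintype ι]
  {Y : Ω → ι → ℝ} {k : ℕ}

lemma exists_hasSubgaussianMGF_apply [DecidableEq ι]
    (hsub : ∀ v : ι → ℝ, ∑ j, v j ^ 2 = 1 → ∃ c > 0, ∀ s : ℝ,
      Integrable (fun ω ↦ exp (s * ∑ j, v j * Y ω j)) μ ∧
      ∫ ω, exp (s * ∑ j, v j * Y ω j) ∂μ ≤ exp (c * s ^ 2 / 2)) (j : ι) :
    ∃ c : ℝ≥0, HasSubgaussianMGF (fun ω ↦ Y ω j) c μ := by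
  obtain ⟨c, hc, h⟩ := hsub (Pi.single j 1) (by simp [Pi.single_apply])
  exact ⟨⟨c, hc.le⟩, fun t ↦ by simpa [Pi.single_apply] using (h t).1,
    fun t ↦ (by simpa [mgf, Pi.single_apply] using (h t).2 :
      mgf (fun ω ↦ Y ω j) μ t ≤ exp (c * t ^ 2 / 2))⟩

lemma sum_sq_pow_le (y : ι → ℝ) (hk : k ≠ 0) :
    (∑ j, y j ^ 2) ^ k ≤ Fintype.card ι ^ (k - 1) * ∑ j, y j ^ (2 * k) := by
  obtain ⟨n, rfl⟩ := Nat.exists_eq_succ_of_ne_zero hk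
  simpa [pow_mul] using
    pow_sum_le_card_mul_sum_pow (s := univ) (f := fun j ↦ y j ^ 2) (fun j _ ↦ sq_nonneg _) n

lemma integrable_sum_sq_pow (hY : ∀ j, AEStronglyMeasurable (fun ω ↦ Y ω j) μ) (hk : k ≠ 0)
    (hint : ∀ j, Integrable (fun ω ↦ Y ω j ^ (2 * k)) μ) :
    Integrable (fun ω ↦ (∑ j, Y ω j ^ 2) ^ k) μ :=
  ((integrable_finsetSum _ fun j _ ↦ hint j).const_mul _).mono' (by fun_prop) <|
    .of_forall fun ω ↦ by rw [Real.norm_of_nonneg (by positivity)]; exact sum_sq_pow_le _ hk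

lemma integrable_sum_sq_add_pow [IsFiniteMeasure μ]
    (hY : ∀ j, AEStronglyMeasurable (fun ω ↦ Y ω j) μ) (hk : k ≠ 0)
    (hint : ∀ j, Integrable (fun ω ↦ Y ω j ^ (2 * k)) μ) {S : ℝ} (hS : 0 ≤ S) :
    Integrable (fun ω ↦ (∑ j, Y ω j ^ 2 + S) ^ k) μ :=
  (((integrable_sum_sq_pow hY hk hint).add (integrable_const (S ^ k))).const_mul
    (2 ^ (k - 1))).mono' (by fun_prop) <| .of_forall fun ω ↦ by
      rw [Real.norm_of_nonneg (by positivity)]; exact add_pow_le (by positivity) hS k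

lemma integral_sum_sq_pow_le (hk : k ≠ 0) (hint : ∀ j, Integrable (fun ω ↦ Y ω j ^ (2 * k)) μ)
    {M : ℝ} (hM : ∀ j, ∫ ω, Y ω j ^ (2 * k) ∂μ ≤ M) :
    ∫ ω, (∑ j, Y ω j ^ 2) ^ k ∂μ ≤ Fintype.card ι ^ k * M := by
  calc ∫ ω, (∑ j, Y ω j ^ 2) ^ k ∂μ
      ≤ ∫ ω, (Fintype.card ι : ℝ) ^ (k - 1) * ∑ j, Y ω j ^ (2 * k) ∂μ :=
        integral_mono_of_nonneg (.of_forall fun ω ↦ by positivity)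
          ((integrable_finsetSum _ fun j _ ↦ hint j).const_mul _)
          (.of_forall fun ω ↦ sum_sq_pow_le _ hk)
    _ = (Fintype.card ι : ℝ) ^ (k - 1) * ∑ j, ∫ ω, Y ω j ^ (2 * k) ∂μ := by
        rw [integral_const_mul, integral_finsetSum _ fun j _ ↦ hint j]
    _ ≤ (Fintype.card ι : ℝ) ^ (k - 1) * ∑ _j : ι, M := by gcongr with j; exact hM j
    _ = Fintype.card ι ^ k * M := by
        rw [sum_const, card_univ, nsmul_eq_mul, ← mul_assoc, ← pow_succ,
          Nat.sub_add_cancel (Nat.one_le_iff_ne_zero.mpr hk)]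

lemma integral_sum_sq_add_pow_le [IsProbabilityMeasure μ] (hk : 2 ≤ k)
    (hY : ∀ j, AEStronglyMeasurable (fun ω ↦ Y ω j) μ)
    (hint : ∀ j, Integrable (fun ω ↦ Y ω j ^ (2 * k)) μ) {K S : ℝ} (hK : 0 ≤ K) (hS : 0 ≤ S)
    (hM : ∀ j, ∫ ω, Y ω j ^ (2 * k) ∂μ ≤ 2 * k ! * K ^ k) :
    ∫ ω, (∑ j, Y ω j ^ 2 + S) ^ k ∂μ ≤ k ! / 2 * (4 * (Fintype.card ι * K + S + 1)) ^ k := by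
  have hk0 : k ≠ 0 := by omega
  have hN := integrable_sum_sq_pow hY hk0 hint
  calc ∫ ω, (∑ j, Y ω j ^ 2 + S) ^ k ∂μ
      ≤ ∫ ω, 2 ^ (k - 1) * ((∑ j, Y ω j ^ 2) ^ k + S ^ k) ∂μ :=
        integral_mono (integrable_sum_sq_add_pow hY hk0 hint hS)
          ((hN.add (integrable_const _)).const_mul _)
          fun ω ↦ add_pow_le (by positivity) hS k
    _ = 2 ^ (k - 1) * (∫ ω, (∑ j, Y ω j ^ 2) ^ k ∂μ + S ^ k) := by
        rw [integral_const_mul, integral_add hN (integrable_const _), integral_const]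
        simp
    _ ≤ 2 ^ (k - 1) * (Fintype.card ι ^ k * (2 * k ! * K ^ k) + S ^ k) := by
        grw [integral_sum_sq_pow_le hk0 hint hM]
    _ = 2 ^ (k - 1) * (2 * k ! * (Fintype.card ι * K) ^ k + S ^ k) := by ring
    _ ≤ k ! / 2 * (4 * (Fintype.card ι * K + S + 1)) ^ k :=
        two_pow_pred_mul_le_factorial_mul hk (by positivity) hS (by linarith)
          (by linarith [show 0 ≤ (Fintype.card ι : ℝ) * K by positivity])

end RandomVector

theorem stmt_12_general {Ω : Type*} [MeasurableSpace Ω] (μ : Measure Ω) [IsProbabilityMeasure μ]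
    {d : ℕ} (Y : Ω → Fin d → ℝ)
    (hsub : ∀ v : Fin d → ℝ, (∑ j, v j ^ 2) = 1 →
      ∃ c > 0, ∀ s : ℝ,
        Integrable (fun ω => Real.exp (s * ∑ j, v j * Y ω j)) μ ∧
        (∫ ω, Real.exp (s * ∑ j, v j * Y ω j) ∂μ) ≤ Real.exp (c * s ^ 2 / 2))
    (Sig : Matrix (Fin d) (Fin d) ℝ)
    (hSig : matExp μ (fun ω => Matrix.of fun a c => Y ω a * Y ω c) = Sig) :
    ∃ B > (0 : ℝ), ∀ k : ℕ, 2 ≤ k →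
      loewnerLE
        (matExp μ (fun ω => (Matrix.of (fun a c => Y ω a * Y ω c) - Sig) ^ k))
        (((k.factorial : ℝ) / 2 * B ^ k) • (1 : Matrix (Fin d) (Fin d) ℝ)) := by
  choose c hc using exists_hasSubgaussianMGF_apply hsub
  set K := ∑ j, 2 * exp (c j / 2)
  have hmoment (j : Fin d) (m : ℕ) : ∫ ω, Y ω j ^ (2 * m) ∂μ ≤ 2 * m ! * K ^ m :=
    (hc j).integral_pow_two_mul_le m |>.trans <| by
      gcongr
      exact single_le_sum (f := fun j ↦ 2 * exp (c j / 2)) (fun _ _ ↦ by positivity) (mem_univ j)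
  refine ⟨4 * (d * K + ‖Sig‖ + 1), by positivity, fun k hk ↦ ?_⟩
  have hY (j : Fin d) := (hc j).aestronglyMeasurable
  have hint (j : Fin d) := (hc j).integrable_pow (2 * k)
  have hSig_herm : Sig.IsHermitian :=
    hSig ▸ isHermitian_matExp fun ω ↦ isHermitian_vecMulVec_self (Y ω)
  refine loewnerLE_matExp_of_norm_le (fun a b ↦ ?_)
    (fun ω ↦ ((isHermitian_vecMulVec_self (Y ω)).sub hSig_herm).pow k)
    (integrable_sum_sq_add_pow hY (by omega) hint (norm_nonneg Sig))
    (fun ω ↦ l2_opNorm_vecMulVec_self_sub_pow_le (Y ω) Sig (by omega)) ?_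
  · have hYm : AEMeasurable Y μ := aemeasurable_pi_lambda _ fun j ↦ (hc j).aemeasurable
    exact (((continuous_id.matrix_vecMulVec continuous_id).sub continuous_const).pow k
      |>.matrix_elem a b).comp_aestronglyMeasurable hYm.aestronglyMeasurable
  · simpa using integral_sum_sq_add_pow_le hk hY hint (by positivity) (norm_nonneg Sig)
      fun j ↦ hmoment j k

/-- if `Y` is a zero-mean sub-Gaussian random vector with
`E[YYᵀ] = Σ`, then `Q = YYᵀ − Σ` satisfies `E[Q^k] ⪯ (1/2) k! B^k I` for all
`k ≥ 2`, for some constant `B > 0`. -/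
theorem stmt_12 {Ω : Type*} [MeasurableSpace Ω] (μ : Measure Ω) [IsProbabilityMeasure μ]
    {d : ℕ} (Y : Ω → Fin d → ℝ) (hmeas : Measurable Y)
    (hsub : ∀ v : Fin d → ℝ, (∑ j, v j ^ 2) = 1 →
      ∃ c > 0, ∀ s : ℝ,
        Integrable (fun ω => Real.exp (s * ∑ j, v j * Y ω j)) μ ∧
        (∫ ω, Real.exp (s * ∑ j, v j * Y ω j) ∂μ) ≤ Real.exp (c * s ^ 2 / 2))
    (hintmean : ∀ j, Integrable (fun ω => Y ω j) μ)
    (hmean : ∀ j, (∫ ω, Y ω j ∂μ) = 0)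
    (Sig : Matrix (Fin d) (Fin d) ℝ)
    (hSig : matExp μ (fun ω => Matrix.of fun a c => Y ω a * Y ω c) = Sig) :
    ∃ B > (0 : ℝ), ∀ k : ℕ, 2 ≤ k →
      loewnerLE
        (matExp μ (fun ω => (Matrix.of (fun a c => Y ω a * Y ω c) - Sig) ^ k))
        (((k.factorial : ℝ) / 2 * B ^ k) • (1 : Matrix (Fin d) (Fin d) ℝ)) :=
  stmt_12_general μ Y hsub Sig hSig
end
end
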